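/- For the reduced weakly irreversible n-site phosphorylation network, with N'_n (N_n minus the first three rows), A'_n (A_n minus the first three rows), and E_n the block-diagonal extreme matrix, the determinant over the field ℝ(λ_1,…,λ_{3n}) satisfies det(N'_n · diag(E_nλ) · A'ᵀ_n) = (−1)^n · ∏_{k=0}^{n−1} (λ_{3k+1} + λ_{3k+2})(λ_{3k+1} + λ_{3k+3}) · λ_{3k+1}³. In particular, this determinant is nonzero, so ker(N'_n diag(E_nλ) Aᵀ_n) over ℝ(λ) has dimension 3. -/

import Mathlib

open Matrix

namespace Weakly

variable (K : Type*) [CommRing K]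

/-- `P₁` block (with `5n+3` rows, as used in forming `N_{n+1}`): nonzero rows are
row 1 = (−1,0,1,−1,0,0,0,0), row 2 = (0,0,0,0,−1,0,1,−1) and the last row
= (−1,0,0,0,0,0,1,−1). -/
def P1 (n : ℕ) : Matrix (Fin (5 * n + 3)) (Fin 8) K := fun i j =>
  if (i : ℕ) = 0 then ![(-1 : K), 0, 1, -1, 0, 0, 0, 0] j
  else if (i : ℕ) = 1 then ![(0 : K), 0, 0, 0, -1, 0, 1, -1] j
  else if (i : ℕ) = 5 * n + 2 then ![(-1 : K), 0, 0, 0, 0, 0, 1, -1] j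
  else 0

def P2 : Matrix (Fin 5) (Fin 8) K :=
  !![1, -1, 0, 0, 0, 0, 0, 0;
     0, 1, -1, 1, 0, 0, 0, 0;
     0, 0, 0, 0, 1, -1, 0, 0;
     0, 0, 0, 0, 0, 1, -1, 1;
     0, 0, 1, -1, -1, 0, 0, 0]

/-- Stoichiometric matrices of the reduced weakly irreversible `n`-site
phosphorylation networks: `N_{n+1} = [[N_n, P₁],[0, P₂]]` (and `N_0` is the
empty 3×0 matrix, so that `N_1 = [P₁; P₂]`). -/
def Nmat : (n : ℕ) → Matrix (Fin (5 * n + 3)) (Fin (8 * n)) K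
  | 0 => 0
  | n + 1 =>
      Matrix.reindex (finSumFinEquiv.trans (finCongr (by omega)))
        (finSumFinEquiv.trans (finCongr (by omega)))
        (Matrix.fromBlocks (Nmat n) (P1 K n) 0 (P2 K))

/-- `Q₁` block of the reactant matrix. -/
def Q1 (n : ℕ) : Matrix (Fin (5 * n + 3)) (Fin 8) K := fun i j =>
  if (i : ℕ) = 0 then ![(1 : K), 0, 0, 1, 0, 0, 0, 0] j
  else if (i : ℕ) = 1 then ![(0 : K), 0, 0, 0, 1, 0, 0, 1] j
  else if (i : ℕ) = 5 * n + 2 then ![(1 : K), 0, 0, 0, 0, 0, 0, 1] j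
  else 0

def Q2 : Matrix (Fin 5) (Fin 8) K :=
  !![0, 1, 0, 0, 0, 0, 0, 0;
     0, 0, 1, 0, 0, 0, 0, 0;
     0, 0, 0, 0, 0, 1, 0, 0;
     0, 0, 0, 0, 0, 0, 1, 0;
     0, 0, 0, 1, 1, 0, 0, 0]

/-- Reactant matrices: `A_{n+1} = [[A_n, Q₁],[0, Q₂]]`. -/
def Amat : (n : ℕ) → Matrix (Fin (5 * n + 3)) (Fin (8 * n)) K
  | 0 => 0
  | n + 1 =>
      Matrix.reindex (finSumFinEquiv.trans (finCongr (by omega)))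
        (finSumFinEquiv.trans (finCongr (by omega)))
        (Matrix.fromBlocks (Amat n) (Q1 K n) 0 (Q2 K))

/-- Conservation law matrix `W_n = [Id₃, W̄, …, W̄]` with
`W̄ = [[1,1,0,0,0],[0,0,1,1,0],[1,1,1,1,1]]`. -/
def Wmat (n : ℕ) : Matrix (Fin 3) (Fin (5 * n + 3)) K := fun i j =>
  if (j : ℕ) < 3 then (if (i : ℕ) = (j : ℕ) then 1 else 0)
  else if (i : ℕ) = 2 then 1
  else if (i : ℕ) = 0 then (if ((j : ℕ) - 3) % 5 < 2 then 1 else 0)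
  else (if ((j : ℕ) - 3) % 5 = 2 ∨ ((j : ℕ) - 3) % 5 = 3 then 1 else 0)

/-- The entries of the block `E₁ ∈ ℝ^{8×3}` with columns `(1,1,1,0,1,1,1,0)ᵀ`,
`(0,0,1,1,0,0,0,0)ᵀ` and `(0,0,0,0,0,0,1,1)ᵀ`. -/
def E1entry (ir kr : ℕ) : K :=
  if kr = 0 then (if ir = 3 ∨ ir = 7 then 0 else 1)
  else if kr = 1 then (if ir = 2 ∨ ir = 3 then 1 else 0)
  else (if ir = 6 ∨ ir = 7 then 1 else 0)

/-- Extreme matrix `E_n`: block diagonal with `n` copies of `E₁`. -/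
def Emat (n : ℕ) : Matrix (Fin (8 * n)) (Fin (3 * n)) K := fun i k =>
  if (i : ℕ) / 8 = (k : ℕ) / 3 then E1entry K ((i : ℕ) % 8) ((k : ℕ) % 3) else 0

/-- Columns of `E_n`. -/
def Ecol (n : ℕ) : Fin (3 * n) → Fin (8 * n) → K := fun k i => Emat K n i k

/-- `N'_n`: the stoichiometric matrix with its first three rows removed. -/
def Nmat' (n : ℕ) : Matrix (Fin (5 * n)) (Fin (8 * n)) K :=
  (Nmat K n).submatrix (fun i => (⟨(i : ℕ) + 3, by have := i.isLt; omega⟩ : Fin (5 * n + 3))) id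

/-- `A'_n`: the reactant matrix with its first three rows removed. -/
def Amat' (n : ℕ) : Matrix (Fin (5 * n)) (Fin (8 * n)) K :=
  (Amat K n).submatrix (fun i => (⟨(i : ℕ) + 3, by have := i.isLt; omega⟩ : Fin (5 * n + 3))) id

/-- The square matrix `N'_n · diag(E_n λ) · A'ᵀ_n`. -/
def Csq (n : ℕ) (lam : Fin (3 * n) → K) : Matrix (Fin (5 * n)) (Fin (5 * n)) K :=
  Nmat' K n * Matrix.diagonal ((Emat K n).mulVec lam) * (Amat' K n)ᵀ

/-- The matrix `N'_n · diag(E_n λ) · Aᵀ_n`. -/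
def Galemat (n : ℕ) (lam : Fin (3 * n) → K) : Matrix (Fin (5 * n)) (Fin (5 * n + 3)) K :=
  Nmat' K n * Matrix.diagonal ((Emat K n).mulVec lam) * (Amat K n)ᵀ

end Weakly

open Weakly

/-!
Grouping rows and columns by site, `N'_{n+1}` and `A'_{n+1}` are block upper triangular with
diagonal blocks `N'_n, P₂` and `A'_n, Q₂`, and `diag(E_{n+1}λ)` is block diagonal. The
off-diagonal block of `N'_{n+1}` has a single nonzero row, equal to minus the sum of the rows of
`P₂`; adding the rows of `P₂` to it is a unimodular row operation that makes `N'_{n+1}` block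
diagonal. Hence `det C_{n+1} = det C_n · det Z_n` for `C_n = N'_n diag(E_nλ) A'ᵀ_n` and the
`5 × 5` block `Z_n = P₂ diag(E₁λ) Q₂ᵀ` built from the rates of the last site. The square matrix
`C_n` consists of all but the first three columns of `N'_n diag(E_nλ) Aᵀ_n`, so when
`det C_n ≠ 0` the latter has rank `5n` and a 3-dimensional kernel.
-/

namespace Matrix

theorem det_fromBlocks_mul_mul_transpose_of_add_mul_eq_zero {K : Type*} [CommRing K]
    {m l r s : Type*} [Fintype m] [Fintype l] [Fintype r] [Fintype s] [DecidableEq m]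
    [DecidableEq l] (N A : Matrix m r K)
    (P Q : Matrix m s K) (R S : Matrix l s K) (D : Matrix r r K) (D' : Matrix s s K)
    (U : Matrix m l K) (hU : P + U * R = 0) :
    (fromBlocks N P 0 R * fromBlocks D 0 0 D' * (fromBlocks A Q 0 S)ᵀ).det
      = (N * D * Aᵀ).det * (R * D' * Sᵀ).det := by
  have hrow : (fromBlocks 1 U 0 1 : Matrix (m ⊕ l) (m ⊕ l) K) * fromBlocks N P 0 R =
      fromBlocks N 0 0 R := by
    simp only [fromBlocks_multiply, Matrix.one_mul, Matrix.mul_zero, Matrix.zero_mul,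
      add_zero, zero_add, hU]
  calc _ = (fromBlocks 1 U 0 1 * (fromBlocks N P 0 R * fromBlocks D 0 0 D' *
          (fromBlocks A Q 0 S)ᵀ)).det := by
        rw [det_mul, det_fromBlocks_zero₂₁, det_one, det_one, one_mul, one_mul]
    _ = (fromBlocks (N * D * Aᵀ) 0 (R * D' * Qᵀ) (R * D' * Sᵀ)).det := by
        rw [← Matrix.mul_assoc, ← Matrix.mul_assoc, hrow, fromBlocks_transpose,
          fromBlocks_multiply, fromBlocks_multiply]
        simp
    _ = _ := det_fromBlocks_zero₁₂ _ _ _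

theorem finrank_ker_mulVecLin_of_det_submatrix_ne_zero {K : Type*} [Field K] {m n : Type*}
    [Fintype m] [Fintype n] [DecidableEq m] (A : Matrix m n K) (f : m → n)
    (h : (A.submatrix id f).det ≠ 0) :
    Module.finrank K (LinearMap.ker A.mulVecLin) = Fintype.card n - Fintype.card m := by
  have hsub : (A.submatrix id f).rank = Fintype.card m :=
    rank_of_isUnit _ ((isUnit_iff_isUnit_det _).mpr h.isUnit)
  have hle : A.rank ≤ Fintype.card m := rank_le_card_height A
  have hge : (A.submatrix id f).rank ≤ A.rank := rank_submatrix_le A id f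
  have hrn := LinearMap.finrank_range_add_finrank_ker A.mulVecLin
  rw [Module.finrank_fintype_fun_eq_card] at hrn
  change A.rank + _ = _ at hrn
  omega

end Matrix

namespace Weakly

variable {K : Type*} [CommRing K]

def sumEquiv {a b c : ℕ} (h : a + b = c) : Fin a ⊕ Fin b ≃ Fin c :=
  finSumFinEquiv.trans (finCongr h)

@[simp] theorem sumEquiv_inl_val {a b c : ℕ} (h : a + b = c) (i : Fin a) :
    (sumEquiv h (.inl i) : ℕ) = i := rfl

@[simp] theorem sumEquiv_inr_val {a b c : ℕ} (h : a + b = c) (j : Fin b) :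
    (sumEquiv h (.inr j) : ℕ) = a + j := rfl

def blockEquiv (k n : ℕ) : Fin (k * n) ⊕ Fin k ≃ Fin (k * (n + 1)) :=
  sumEquiv (by ring)

theorem submatrix_reindex_fromBlocks {a b c d e f : ℕ} (X : Matrix (Fin (a + 3)) (Fin c) K)
    (B : Matrix (Fin (a + 3)) (Fin d) K) (C : Matrix (Fin b) (Fin d) K)
    (h : a + 3 + b = e + 3) (h' : a + b = e) (hc : c + d = f) :
    ((reindex (sumEquiv h) (sumEquiv hc) (fromBlocks X B 0 C)).submatrix (·.addNat 3) id).submatrix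
        (sumEquiv h') (sumEquiv hc)
      = fromBlocks (X.submatrix (·.addNat 3) id) (B.submatrix (·.addNat 3) id) 0 C := by
  have hrow : ∀ p, (sumEquiv h).symm ((sumEquiv h' p).addNat 3) = Sum.map (·.addNat 3) id p := by
    intro p
    apply (sumEquiv h).injective
    ext
    rcases p with i | i
    · simp only [Equiv.apply_symm_apply, Fin.val_addNat, sumEquiv_inl_val, Sum.map_inl]
    · simp only [Equiv.apply_symm_apply, Fin.val_addNat, sumEquiv_inr_val, Sum.map_inr, id_eq]
      omega
  ext p q
  simp only [reindex_apply, submatrix_submatrix, submatrix_apply, Function.comp_apply, hrow,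
    id_eq, Equiv.symm_apply_apply]
  rcases p with i | i <;> rcases q with j | j <;> rfl

theorem Nmat'_succ (n : ℕ) :
    (Nmat' K (n + 1)).submatrix (blockEquiv 5 n) (blockEquiv 8 n)
      = fromBlocks (Nmat' K n) ((P1 K n).submatrix (·.addNat 3) id) 0 (P2 K) := by
  rw [Nmat', Nmat]
  exact submatrix_reindex_fromBlocks _ _ _ _ _ _

theorem Amat'_succ (n : ℕ) :
    (Amat' K (n + 1)).submatrix (blockEquiv 5 n) (blockEquiv 8 n)
      = fromBlocks (Amat' K n) ((Q1 K n).submatrix (·.addNat 3) id) 0 (Q2 K) := by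
  rw [Amat', Amat]
  exact submatrix_reindex_fromBlocks _ _ _ _ _ _

theorem exists_P1_add_mul_P2_eq_zero (n : ℕ) :
    ∃ U : Matrix (Fin (5 * n)) (Fin 5) K, (P1 K n).submatrix (·.addNat 3) id + U * P2 K = 0 := by
  refine ⟨of fun i _ => if (i : ℕ) + 1 = 5 * n then 1 else 0, ?_⟩
  ext i j
  by_cases hi : (i : ℕ) + 1 = 5 * n
  · fin_cases j <;> simp [P1, P2, mul_apply, Fin.sum_univ_succ, hi]
  · fin_cases j <;> simp [P1, P2, mul_apply, hi]

variable (K) in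
def E1 : Matrix (Fin 8) (Fin 3) K := of fun i k => E1entry K i k

theorem Emat_succ (n : ℕ) :
    (Emat K (n + 1)).submatrix (blockEquiv 8 n) (blockEquiv 3 n)
      = fromBlocks (Emat K n) 0 0 (E1 K) := by
  ext (i | i) (k | k) <;>
    simp only [Emat, blockEquiv, submatrix_apply, sumEquiv_inl_val, sumEquiv_inr_val,
      fromBlocks_apply₁₁, fromBlocks_apply₁₂, fromBlocks_apply₂₁, fromBlocks_apply₂₂, E1, of_apply,
      Matrix.zero_apply]
  · rfl
  · exact if_neg (by omega)
  · exact if_neg (by omega)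
  · exact (if_pos (by omega)).trans (congrArg₂ _ (by omega) (by omega))

theorem diagonal_Emat_mulVec_succ (n : ℕ) (lam : Fin (3 * (n + 1)) → K) :
    (diagonal (Emat K (n + 1) *ᵥ lam)).submatrix (blockEquiv 8 n) (blockEquiv 8 n)
      = fromBlocks (diagonal (Emat K n *ᵥ (lam ∘ blockEquiv 3 n ∘ Sum.inl))) 0 0
          (diagonal (E1 K *ᵥ (lam ∘ blockEquiv 3 n ∘ Sum.inr))) := by
  rw [submatrix_diagonal_equiv, fromBlocks_diagonal]
  congr 1
  calc (Emat K (n + 1) *ᵥ lam) ∘ blockEquiv 8 n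
      = (Emat K (n + 1)).submatrix (blockEquiv 8 n) (blockEquiv 3 n) *ᵥ (lam ∘ blockEquiv 3 n) := by
        rw [submatrix_mulVec_equiv, Function.comp_assoc, Equiv.self_comp_symm, Function.comp_id]
    _ = _ := by
        rw [Emat_succ, fromBlocks_mulVec]
        simp only [zero_mulVec, add_zero, zero_add, Function.comp_assoc]

theorem E1_mulVec (μ : Fin 3 → K) :
    E1 K *ᵥ μ = ![μ 0, μ 0, μ 0 + μ 1, μ 1, μ 0, μ 0, μ 0 + μ 2, μ 2] := by
  ext i
  fin_cases i <;> simp [E1, E1entry, mulVec, dotProduct, Fin.sum_univ_three]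

variable (K) in
def siteBlock (μ : Fin 3 → K) : Matrix (Fin 5) (Fin 5) K :=
  P2 K * diagonal (E1 K *ᵥ μ) * (Q2 K)ᵀ

theorem det_siteBlock (μ : Fin 3 → K) :
    (siteBlock K μ).det = -((μ 0 + μ 1) * (μ 0 + μ 2) * μ 0 ^ 3) := by
  have hZ : siteBlock K μ =
      !![-μ 0, 0, 0, 0, 0;
         μ 0, -(μ 0 + μ 1), 0, 0, μ 1;
         0, 0, -μ 0, 0, μ 0;
         0, 0, μ 0, -(μ 0 + μ 2), 0;
         0, μ 0 + μ 1, 0, 0, -(μ 0 + μ 1)] := by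
    ext i j
    fin_cases i <;> fin_cases j <;>
      simp [siteBlock, E1_mulVec, P2, Q2, mul_apply, Fin.sum_univ_succ, vecMul_diagonal]
  rw [hZ, det_succ_row_zero]
  simp [Fin.sum_univ_succ, det_succ_row_zero, Fin.succAbove]
  ring

theorem det_Csq_succ (n : ℕ) (lam : Fin (3 * (n + 1)) → K) :
    (Csq K (n + 1) lam).det
      = (Csq K n (lam ∘ blockEquiv 3 n ∘ Sum.inl)).det
          * (siteBlock K (lam ∘ blockEquiv 3 n ∘ Sum.inr)).det := by
  obtain ⟨U, hU⟩ := exists_P1_add_mul_P2_eq_zero (K := K) n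
  rw [← det_submatrix_equiv_self (blockEquiv 5 n), Csq,
    submatrix_mul _ _ _ (blockEquiv 8 n) _ (blockEquiv 8 n).bijective,
    submatrix_mul _ _ _ (blockEquiv 8 n) _ (blockEquiv 8 n).bijective, ← transpose_submatrix,
    Nmat'_succ, Amat'_succ, diagonal_Emat_mulVec_succ]
  exact det_fromBlocks_mul_mul_transpose_of_add_mul_eq_zero _ _ _ _ _ _ _ _ U hU

def siteRates {n : ℕ} (lam : Fin (3 * n) → K) (k : Fin n) : Fin 3 → K :=
  fun s => lam ⟨3 * k + s, by omega⟩

theorem det_Csq_eq_prod_det_siteBlock (n : ℕ) (lam : Fin (3 * n) → K) :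
    (Csq K n lam).det = ∏ k, (siteBlock K (siteRates lam k)).det := by
  induction n with
  | zero => simp
  | succ n ih =>
    rw [det_Csq_succ, ih, Fin.prod_univ_castSucc]
    rfl

theorem det_Csq_eq (n : ℕ) (lam : Fin (3 * n) → K) :
    (Csq K n lam).det = (-1 : K) ^ n * ∏ k, ((siteRates lam k 0 + siteRates lam k 1) *
      (siteRates lam k 0 + siteRates lam k 2) * siteRates lam k 0 ^ 3) := by
  rw [det_Csq_eq_prod_det_siteBlock, Finset.prod_congr rfl fun k _ => det_siteBlock _,
    Finset.prod_neg, Finset.card_univ, Fintype.card_fin]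

end Weakly

/-- for the reduced weakly irreversible `n`-site network, over any
field `K` (in particular `ℝ(λ)`),
`det(N'_n diag(E_n λ) A'ᵀ_n) = (−1)^n ∏_{k=0}^{n−1} (λ_{3k+1}+λ_{3k+2})(λ_{3k+1}+λ_{3k+3}) λ_{3k+1}³`
(0-based: `λ_{3k+1}` is `lam ⟨3k⟩`).  When all these factors are nonzero, the
kernel of `N'_n diag(E_n λ) Aᵀ_n` has dimension 3. -/
theorem stmt18 (K : Type*) [Field K] (n : ℕ) (lam : Fin (3 * n) → K) :
    (Csq K n lam).det
        = (-1 : K) ^ n *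
          ∏ k : Fin n,
            ((lam ⟨3 * (k : ℕ), by have := k.isLt; omega⟩
                + lam ⟨3 * (k : ℕ) + 1, by have := k.isLt; omega⟩) *
              (lam ⟨3 * (k : ℕ), by have := k.isLt; omega⟩
                + lam ⟨3 * (k : ℕ) + 2, by have := k.isLt; omega⟩) *
              lam ⟨3 * (k : ℕ), by have := k.isLt; omega⟩ ^ 3) ∧
    ((∀ k : Fin n,
        lam ⟨3 * (k : ℕ), by have := k.isLt; omega⟩ ≠ 0 ∧
        lam ⟨3 * (k : ℕ), by have := k.isLt; omega⟩
            + lam ⟨3 * (k : ℕ) + 1, by have := k.isLt; omega⟩ ≠ 0 ∧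
        lam ⟨3 * (k : ℕ), by have := k.isLt; omega⟩
            + lam ⟨3 * (k : ℕ) + 2, by have := k.isLt; omega⟩ ≠ 0) →
      Module.finrank K (LinearMap.ker (Galemat K n lam).mulVecLin) = 3) := by
  have hdet := det_Csq_eq n lam
  refine ⟨hdet, fun h => ?_⟩
  have hne : (Csq K n lam).det ≠ 0 := by
    rw [hdet]
    refine mul_ne_zero (pow_ne_zero _ (neg_ne_zero.mpr one_ne_zero))
      (Finset.prod_ne_zero_iff.mpr fun k _ => ?_)
    obtain ⟨h0, h1, h2⟩ := h k
    exact mul_ne_zero (mul_ne_zero h1 h2) (pow_ne_zero _ h0)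
  -- `Csq K n lam` is `Galemat K n lam` with its first three columns deleted.
  simpa using (Galemat K n lam).finrank_ker_mulVecLin_of_det_submatrix_ne_zero (·.addNat 3) hne
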